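/- Consider the one-dimensional sine-Gordon equation ∂_{tt}u - ∂_{xx}u = sin(u) on the torus Ω = [0,1] with initial data u(0) = u₀ ∈ BV(Ω) ∩ L^∞(Ω) and ∂_t u(0) = v₀ ∈ M(Ω) (a finite Borel measure). Then u(t) ∈ BV(Ω) ∩ L^∞(Ω) for all t ∈ [0,T], and ‖u(t)‖_{BV} + ‖u(t)‖_{L^∞} ≲ T² + ‖u₀‖_{BV} + ‖u₀‖_{L^∞} + ‖v₀‖_{M}. -/

import Mathlib

/-!
Each term of the d'Alembert–Duhamel representation is estimated separately. Since `|sin| ≤ 1`,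
the Duhamel term is at most `t²` in sup norm, the initial position contributes `‖u₀‖_∞` and the
initial velocity `|v₀|(ℝ)`; this bounds `‖u‖_∞` on `[0, T]`. For the variation: moving `x` shifts
both ends of every light-cone slice, so the Duhamel term is Lipschitz with constant
`2t · sup |sin u| ≤ 2t · min(1, ‖u‖_∞)`, which is `O(T² + data)` also for small `T`; the copies
`u₀(· ± t)` have variation at most twice that of `u₀` over a period, by periodicity; and the
increments of `x ↦ v₀((x - t, x + t])` are dominated by translates of the total variation `|v₀|`.
-/

open MeasureTheory ENNReal

noncomputable section

/-- BV norm on the 1D torus (for 1-periodic functions on ℝ): L¹ norm over one period plus the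
variation over one period. -/
def bvNormR (w : ℝ → ℝ) : ℝ≥0∞ :=
  (∫⁻ x in Set.Ioc (0:ℝ) 1, (‖w x‖₊ : ℝ≥0∞)) + eVariationOn w (Set.Icc 0 1)

/-- The sup norm of a function on ℝ. -/
def supNormR (w : ℝ → ℝ) : ℝ≥0∞ := ⨆ x : ℝ, (‖w x‖₊ : ℝ≥0∞)

open Set

section Variation

variable {α E : Type*} [LinearOrder α]

theorem eVariationOn_add_le [SeminormedAddCommGroup E] (f g : α → E) (s : Set α) :
    eVariationOn (fun x => f x + g x) s ≤ eVariationOn f s + eVariationOn g s := by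
  refine iSup_le fun ⟨n, u, hu, us⟩ => ?_
  calc ∑ i ∈ Finset.range n, edist (f (u (i + 1)) + g (u (i + 1))) (f (u i) + g (u i))
      ≤ ∑ i ∈ Finset.range n,
          (edist (f (u (i + 1))) (f (u i)) + edist (g (u (i + 1))) (g (u i))) :=
        Finset.sum_le_sum fun i _ => edist_add_add_le _ _ _ _
    _ = _ := Finset.sum_add_distrib
    _ ≤ eVariationOn f s + eVariationOn g s :=
        add_le_add (eVariationOn.sum_le hu us) (eVariationOn.sum_le hu us)

theorem eVariationOn_const_mul_le (c : ℝ) (f : α → ℝ) (s : Set α) :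
    eVariationOn (fun x => c * f x) s ≤ ‖c‖₊ * eVariationOn f s :=
  (lipschitzWith_smul c).lipschitzOnWith.comp_eVariationOn_le (mapsTo_univ _ _)

theorem eVariationOn_Icc_le_measure_Ioc [PseudoEMetricSpace E] [TopologicalSpace α]
    [OrderClosedTopology α] [MeasurableSpace α] [OpensMeasurableSpace α]
    {f : α → E} {a b : α} (μ : Measure α)
    (h : ∀ x ∈ Icc a b, ∀ y ∈ Icc a b, x ≤ y → edist (f y) (f x) ≤ μ (Ioc x y)) :
    eVariationOn f (Icc a b) ≤ μ (Ioc a b) := by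
  refine iSup_le fun ⟨n, u, hu, us⟩ => ?_
  calc ∑ i ∈ Finset.range n, edist (f (u (i + 1))) (f (u i))
      ≤ ∑ i ∈ Finset.range n, μ (Ioc (u i) (u (i + 1))) :=
        Finset.sum_le_sum fun i _ => h _ (us i) _ (us (i + 1)) (hu i.le_succ)
    _ = μ (⋃ i ∈ Finset.range n, Ioc (u i) (u (i + 1))) :=
        (measure_biUnion_finset (hu.pairwise_disjoint_on_Ioc_succ.set_pairwise _)
          fun _ _ => measurableSet_Ioc).symm
    _ ≤ μ (Ioc a b) :=
        measure_mono (iUnion₂_subset fun i _ => Ioc_subset_Ioc (us i).1 (us (i + 1)).2)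

theorem eVariationOn_comp_add_right [PseudoEMetricSpace E] (f : ℝ → E) (c a b : ℝ) :
    eVariationOn (fun x => f (x + c)) (Icc a b) = eVariationOn f (Icc (a + c) (b + c)) := by
  rw [← image_add_const_Icc]
  exact eVariationOn.comp_eq_of_monotoneOn f (· + c) fun x _ y _ h => by simpa using h

theorem Function.Periodic.eVariationOn_Icc_add [PseudoEMetricSpace E] {f : ℝ → E} {c : ℝ}
    (hf : Function.Periodic f c) (a b : ℝ) :
    eVariationOn f (Icc (a + c) (b + c)) = eVariationOn f (Icc a b) := by
  rw [← eVariationOn_comp_add_right, funext hf]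

theorem Function.Periodic.eVariationOn_Icc_le [PseudoEMetricSpace E] {f : ℝ → E} {p : ℝ}
    (hf : Function.Periodic f p) (hp : 0 < p) (a : ℝ) :
    eVariationOn f (Icc a (a + p)) ≤ 2 * eVariationOn f (Icc 0 p) := by
  set k : ℤ := ⌊a / p⌋
  have hk : k * p ≤ a := by
    have := Int.floor_le (a / p); rwa [le_div_iff₀ hp] at this
  have hk' : a < (k + 1) * p := by
    have := Int.lt_floor_add_one (a / p); rwa [div_lt_iff₀ hp] at this
  have hwindow : ∀ m : ℤ, eVariationOn f (Icc (m * p) (m * p + p)) = eVariationOn f (Icc 0 p) :=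
    fun m => by simpa [add_comm] using (hf.int_mul m).eVariationOn_Icc_add 0 p
  calc eVariationOn f (Icc a (a + p))
      ≤ eVariationOn f (Icc (k * p) ((k + 1) * p + p)) :=
        eVariationOn.mono _ (Icc_subset_Icc hk (by linarith))
    _ = eVariationOn f (Icc (k * p) (k * p + p))
          + eVariationOn f (Icc ((k + 1 : ℤ) * p) ((k + 1 : ℤ) * p + p)) := by
        have := eVariationOn.Icc_add_Icc f (s := univ) (a := k * p) (b := (k + 1) * p)
          (c := (k + 1) * p + p) (by nlinarith) (by linarith) (mem_univ _)
        simp only [univ_inter] at this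
        push_cast
        rw [← this, add_one_mul]
    _ = 2 * eVariationOn f (Icc 0 p) := by rw [hwindow, hwindow, two_mul]

theorem Function.Periodic.eVariationOn_comp_add_right_le [PseudoEMetricSpace E] {f : ℝ → E}
    {p : ℝ} (hf : Function.Periodic f p) (hp : 0 < p) (c : ℝ) :
    eVariationOn (fun x => f (x + c)) (Icc 0 p) ≤ 2 * eVariationOn f (Icc 0 p) := by
  rw [eVariationOn_comp_add_right, zero_add, add_comm p]
  exact hf.eVariationOn_Icc_le hp c

end Variation

namespace MeasureTheory.SignedMeasure

theorem apply_Ioc_sub_apply_Ioc (v : SignedMeasure ℝ) {r x y : ℝ} (hr : 0 ≤ r) (hxy : x ≤ y) :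
    v (Ioc (y - r) (y + r)) - v (Ioc (x - r) (x + r))
      = v (Ioc (x + r) (y + r)) - v (Ioc (x - r) (y - r)) := by
  have split : ∀ {a b c : ℝ}, a ≤ b → b ≤ c → v (Ioc a c) = v (Ioc a b) + v (Ioc b c) :=
    fun hab hbc => by
      rw [← Ioc_union_Ioc_eq_Ioc hab hbc,
        v.of_union (Ioc_disjoint_Ioc_of_le le_rfl) measurableSet_Ioc measurableSet_Ioc]
  have h₁ := split (a := x - r) (b := x + r) (c := y + r) (by linarith) (by linarith)
  have h₂ := split (a := x - r) (b := y - r) (c := y + r) (by linarith) (by linarith)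
  linarith

theorem eVariationOn_apply_Ioc_le (v : SignedMeasure ℝ) {r : ℝ} (hr : 0 ≤ r) (a b : ℝ) :
    eVariationOn (fun x => v (Ioc (x - r) (x + r))) (Icc a b) ≤ 2 * v.totalVariation univ := by
  set μ := v.totalVariation.map (· - r) + v.totalVariation.map (· + r)
  have hμ : ∀ s, MeasurableSet s →
      μ s = v.totalVariation ((· - r) ⁻¹' s) + v.totalVariation ((· + r) ⁻¹' s) := fun s hs => by
    rw [Measure.add_apply, Measure.map_apply (measurable_sub_const r) hs,
      Measure.map_apply (measurable_add_const r) hs]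
  calc eVariationOn (fun x => v (Ioc (x - r) (x + r))) (Icc a b)
      ≤ μ (Ioc a b) := by
        refine eVariationOn_Icc_le_measure_Ioc μ fun x _ y _ hxy => ?_
        rw [edist_eq_enorm_sub, apply_Ioc_sub_apply_Ioc v hr hxy, hμ _ measurableSet_Ioc,
          preimage_sub_const_Ioc, preimage_add_const_Ioc]
        exact (enorm_sub_le).trans
          (add_le_add (v.enorm_le_totalVariation _) (v.enorm_le_totalVariation _))
    _ ≤ μ univ := measure_mono (subset_univ _)
    _ = 2 * v.totalVariation univ := by
        rw [hμ _ MeasurableSet.univ, preimage_univ, preimage_univ, two_mul]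

theorem abs_apply_le_totalVariation_univ {X : Type*} [MeasurableSpace X] (v : SignedMeasure X)
    (s : Set X) :
    |v s| ≤ v.totalVariation.real univ :=
  (v.norm_le_totalVariation s).trans (measureReal_mono (subset_univ s))

end MeasureTheory.SignedMeasure

theorem Measurable.stronglyMeasurable_setIntegral_Ioc {α : Type*} [MeasurableSpace α]
    {g : α → ℝ → ℝ} (hg : Measurable (Function.uncurry g)) {p q : α → ℝ}
    (hp : Measurable p) (hq : Measurable q) :
    StronglyMeasurable fun s => ∫ y in Ioc (p s) (q s), g s y := by
  have hind : Measurable fun z : α × ℝ => (Ioc (p z.1) (q z.1)).indicator (g z.1) z.2 := by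
    simp only [indicator_apply, mem_Ioc]
    exact Measurable.ite ((measurableSet_lt (hp.comp measurable_fst) measurable_snd).inter
      (measurableSet_le measurable_snd (hq.comp measurable_fst))) hg measurable_const
  simpa only [integral_indicator measurableSet_Ioc] using
    hind.stronglyMeasurable.integral_prod_right' (ν := volume)

theorem Measurable.stronglyMeasurable_intervalIntegral {α : Type*} [MeasurableSpace α]
    {g : α → ℝ → ℝ} (hg : Measurable (Function.uncurry g)) {p q : α → ℝ}
    (hp : Measurable p) (hq : Measurable q) :
    StronglyMeasurable fun s => ∫ y in p s..q s, g s y :=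
  (hg.stronglyMeasurable_setIntegral_Ioc hp hq).sub (hg.stronglyMeasurable_setIntegral_Ioc hq hp)

theorem Measurable.intervalIntegrable_of_abs_le {g : ℝ → ℝ} {J : ℝ} (hg : Measurable g)
    (hJ : ∀ y, |g y| ≤ J) (a b : ℝ) : IntervalIntegrable g volume a b := by
  rw [intervalIntegrable_iff]
  exact Measure.integrableOn_of_bounded measure_Ioc_lt_top.ne hg.aestronglyMeasurable
    (Filter.Eventually.of_forall hJ)

theorem abs_intervalIntegral_sub_intervalIntegral_le {g : ℝ → ℝ} {J : ℝ} (hg : Measurable g)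
    (hJ : ∀ y, |g y| ≤ J) (a₁ b₁ a₂ b₂ : ℝ) :
    |(∫ y in a₁..b₁, g y) - ∫ y in a₂..b₂, g y| ≤ J * (|a₂ - a₁| + |b₂ - b₁|) := by
  have hint := hg.intervalIntegrable_of_abs_le hJ
  rw [intervalIntegral.integral_interval_sub_interval_comm (hint _ _) (hint _ _) (hint _ _),
    mul_add]
  exact (abs_sub _ _).trans (add_le_add
    (intervalIntegral.norm_integral_le_of_norm_le_const (f := g) fun y _ => hJ y)
    (intervalIntegral.norm_integral_le_of_norm_le_const (f := g) fun y _ => hJ y))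

def duhamel (g : ℝ → ℝ → ℝ) (t x : ℝ) : ℝ :=
  ∫ s in (0:ℝ)..t, ∫ y in (x - t + s)..(x + t - s), g s y

section Duhamel

variable {g : ℝ → ℝ → ℝ} {J t : ℝ}

theorem abs_integral_lightCone_slice_le (hJ : ∀ s ∈ Icc 0 t, ∀ y, |g s y| ≤ J) {s : ℝ}
    (hs : s ∈ Icc 0 t) (x : ℝ) : |∫ y in (x - t + s)..(x + t - s), g s y| ≤ 2 * J * t := by
  have hJ0 : 0 ≤ J := (abs_nonneg _).trans (hJ s hs 0)
  calc |∫ y in (x - t + s)..(x + t - s), g s y| ≤ J * |x + t - s - (x - t + s)| :=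
        intervalIntegral.norm_integral_le_of_norm_le_const (f := g s) fun y _ => hJ s hs y
    _ ≤ 2 * J * t := by
        rw [abs_of_nonneg (by linarith [hs.2])]; nlinarith [hs.1]

theorem abs_duhamel_le (hJ : ∀ s ∈ Icc 0 t, ∀ y, |g s y| ≤ J) (ht : 0 ≤ t) (x : ℝ) :
    |duhamel g t x| ≤ 2 * J * t ^ 2 := by
  have hslice : ∀ s ∈ uIoc 0 t, |∫ y in (x - t + s)..(x + t - s), g s y| ≤ 2 * J * t :=
    fun s hs => abs_integral_lightCone_slice_le hJ
      (Ioc_subset_Icc_self (by rwa [uIoc_of_le ht] at hs)) x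
  calc |duhamel g t x| ≤ 2 * J * t * |t - 0| :=
        intervalIntegral.norm_integral_le_of_norm_le_const
          (f := fun s => ∫ y in (x - t + s)..(x + t - s), g s y) hslice
    _ = 2 * J * t ^ 2 := by rw [sub_zero, abs_of_nonneg ht]; ring

theorem intervalIntegrable_lightCone_slice (hg : Measurable (Function.uncurry g))
    (hJ : ∀ s ∈ Icc 0 t, ∀ y, |g s y| ≤ J) (ht : 0 ≤ t) (x : ℝ) :
    IntervalIntegrable (fun s => ∫ y in (x - t + s)..(x + t - s), g s y) volume 0 t := by
  rw [intervalIntegrable_iff_integrableOn_Icc_of_le ht]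
  refine Measure.integrableOn_of_bounded (M := 2 * J * t) measure_Icc_lt_top.ne
    (hg.stronglyMeasurable_intervalIntegral (by fun_prop) (by fun_prop)).aestronglyMeasurable ?_
  filter_upwards [ae_restrict_mem measurableSet_Icc] with s hs
  exact abs_integral_lightCone_slice_le hJ hs x

theorem abs_duhamel_sub_le (hg : Measurable (Function.uncurry g))
    (hJ : ∀ s ∈ Icc 0 t, ∀ y, |g s y| ≤ J) (ht : 0 ≤ t) (x x' : ℝ) :
    |duhamel g t x' - duhamel g t x| ≤ 2 * J * t * |x' - x| := by
  have hslice : ∀ s ∈ uIoc 0 t, |(∫ y in (x' - t + s)..(x' + t - s), g s y)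
      - ∫ y in (x - t + s)..(x + t - s), g s y| ≤ 2 * J * |x' - x| := by
    intro s hs
    have hs : s ∈ Icc 0 t := Ioc_subset_Icc_self (by rwa [uIoc_of_le ht] at hs)
    calc _ ≤ J * (|x - t + s - (x' - t + s)| + |x + t - s - (x' + t - s)|) :=
          abs_intervalIntegral_sub_intervalIntegral_le (hg.comp measurable_prodMk_left)
            (hJ s hs) _ _ _ _
      _ = 2 * J * |x' - x| := by
          rw [show x - t + s - (x' - t + s) = x - x' by ring,
            show x + t - s - (x' + t - s) = x - x' by ring, abs_sub_comm]
          ring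
  rw [duhamel, duhamel, ← intervalIntegral.integral_sub
    (intervalIntegrable_lightCone_slice hg hJ ht x')
    (intervalIntegrable_lightCone_slice hg hJ ht x)]
  calc _ ≤ 2 * J * |x' - x| * |t - 0| :=
        intervalIntegral.norm_integral_le_of_norm_le_const (f := fun s =>
          (∫ y in (x' - t + s)..(x' + t - s), g s y) - ∫ y in (x - t + s)..(x + t - s), g s y)
          hslice
    _ = 2 * J * t * |x' - x| := by rw [sub_zero, abs_of_nonneg ht]; ring

theorem eVariationOn_duhamel_le (hg : Measurable (Function.uncurry g))
    (hJ : ∀ s ∈ Icc 0 t, ∀ y, |g s y| ≤ J) (ht : 0 ≤ t) (a b : ℝ) :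
    eVariationOn (duhamel g t) (Icc a b)
      ≤ ENNReal.ofReal (2 * J * t) * ENNReal.ofReal (b - a) := by
  have hK : 0 ≤ 2 * J * t := by
    have := (abs_nonneg _).trans (hJ 0 (left_mem_Icc.2 ht) 0); positivity
  have hvol : ∀ x y, (ENNReal.ofReal (2 * J * t) • volume) (Ioc x y)
      = ENNReal.ofReal (2 * J * t) * ENNReal.ofReal (y - x) := fun x y => by
    rw [Measure.smul_apply, Real.volume_Ioc, smul_eq_mul]
  refine (eVariationOn_Icc_le_measure_Ioc _ fun x _ y _ hxy => ?_).trans_eq (hvol a b)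
  rw [hvol, ← ENNReal.ofReal_mul hK, edist_dist, Real.dist_eq]
  refine ENNReal.ofReal_le_ofReal ((abs_duhamel_sub_le hg hJ ht x y).trans_eq ?_)
  rw [abs_of_nonneg (sub_nonneg.2 hxy)]

end Duhamel

def dAlembert (g : ℝ → ℝ → ℝ) (u₀ : ℝ → ℝ) (v₀ : SignedMeasure ℝ) (t x : ℝ) : ℝ :=
  (1/2) * duhamel g t x + (1/2) * (u₀ (x + t) + u₀ (x - t)) + (1/2) * v₀ (Ioc (x - t) (x + t))

section DAlembert

variable {g : ℝ → ℝ → ℝ} {u₀ : ℝ → ℝ} {v₀ : SignedMeasure ℝ} {J t : ℝ}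

theorem abs_dAlembert_le (hJ : ∀ s ∈ Icc 0 t, ∀ y, |g s y| ≤ J) (ht : 0 ≤ t) {S : ℝ}
    (hS : ∀ z, |u₀ z| ≤ S) (x : ℝ) :
    |dAlembert g u₀ v₀ t x| ≤ J * t ^ 2 + S + v₀.totalVariation.real univ := by
  have hD := abs_duhamel_le hJ ht x
  have hv := v₀.abs_apply_le_totalVariation_univ (Ioc (x - t) (x + t))
  have hM := measureReal_nonneg (μ := v₀.totalVariation) (s := univ)
  have hright := hS (x + t)
  have hleft := hS (x - t)
  rw [abs_le] at hD hv hright hleft ⊢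
  constructor <;> · unfold dAlembert; linarith

theorem eVariationOn_dAlembert_le (hg : Measurable (Function.uncurry g))
    (hJ : ∀ s ∈ Icc 0 t, ∀ y, |g s y| ≤ J) (ht : 0 ≤ t) (hu₀ : Function.Periodic u₀ 1) :
    eVariationOn (dAlembert g u₀ v₀ t) (Icc 0 1)
      ≤ ENNReal.ofReal (2 * J * t) + 4 * eVariationOn u₀ (Icc 0 1)
        + 2 * v₀.totalVariation univ := by
  have half : ∀ f : ℝ → ℝ,
      eVariationOn (fun x => (1/2 : ℝ) * f x) (Icc 0 1) ≤ eVariationOn f (Icc 0 1) := fun f =>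
    (eVariationOn_const_mul_le _ f _).trans (mul_le_of_le_one_left (by positivity) (by
      rw [ENNReal.coe_le_one_iff, ← NNReal.coe_le_one, coe_nnnorm]; norm_num))
  have hshift : ∀ c, eVariationOn (fun x => u₀ (x + c)) (Icc 0 1)
      ≤ 2 * eVariationOn u₀ (Icc 0 1) := hu₀.eVariationOn_comp_add_right_le one_pos
  calc eVariationOn (dAlembert g u₀ v₀ t) (Icc 0 1)
      ≤ eVariationOn (fun x => (1/2 : ℝ) * duhamel g t x) (Icc 0 1)
        + eVariationOn (fun x => (1/2 : ℝ) * (u₀ (x + t) + u₀ (x - t))) (Icc 0 1)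
        + eVariationOn (fun x => (1/2 : ℝ) * v₀ (Ioc (x - t) (x + t))) (Icc 0 1) :=
        (eVariationOn_add_le _ _ _).trans (add_le_add_left (eVariationOn_add_le _ _ _) _)
    _ ≤ eVariationOn (duhamel g t) (Icc 0 1)
        + (eVariationOn (fun x => u₀ (x + t)) (Icc 0 1)
          + eVariationOn (fun x => u₀ (x + -t)) (Icc 0 1))
        + eVariationOn (fun x => v₀ (Ioc (x - t) (x + t))) (Icc 0 1) := by
        gcongr
        · exact half _
        · simpa only [sub_eq_add_neg] using (half _).trans (eVariationOn_add_le _ _ _)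
        · exact half _
    _ ≤ ENNReal.ofReal (2 * J * t) * ENNReal.ofReal (1 - 0)
        + (2 * eVariationOn u₀ (Icc 0 1) + 2 * eVariationOn u₀ (Icc 0 1))
        + 2 * v₀.totalVariation univ := by
        gcongr
        · exact eVariationOn_duhamel_le hg hJ ht 0 1
        · exact hshift t
        · exact hshift (-t)
        · exact v₀.eVariationOn_apply_Ioc_le ht 0 1
    _ = ENNReal.ofReal (2 * J * t) + 4 * eVariationOn u₀ (Icc 0 1)
        + 2 * v₀.totalVariation univ := by
        rw [sub_zero, ENNReal.ofReal_one, mul_one, ← add_mul]; norm_num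

end DAlembert

theorem abs_le_toReal_supNormR {w : ℝ → ℝ} (h : supNormR w ≠ ⊤) (x : ℝ) :
    |w x| ≤ (supNormR w).toReal := by
  rw [← ENNReal.ofReal_le_iff_le_toReal h, ← Real.norm_eq_abs, ofReal_norm]
  exact le_iSup (fun x : ℝ => (‖w x‖₊ : ℝ≥0∞)) x

theorem supNormR_le_ofReal {w : ℝ → ℝ} {c : ℝ} (h : ∀ x, |w x| ≤ c) :
    supNormR w ≤ ENNReal.ofReal c :=
  iSup_le fun x => by
    rw [show (‖w x‖₊ : ℝ≥0∞) = ENNReal.ofReal |w x| by rw [← Real.norm_eq_abs, ofReal_norm]; rfl]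
    exact ENNReal.ofReal_le_ofReal (h x)

theorem bvNormR_le_supNormR_add (w : ℝ → ℝ) :
    bvNormR w ≤ supNormR w + eVariationOn w (Icc 0 1) := by
  refine add_le_add_left ?_ _
  calc (∫⁻ x in Ioc (0:ℝ) 1, (‖w x‖₊ : ℝ≥0∞)) ≤ ∫⁻ _ in Ioc (0:ℝ) 1, supNormR w :=
        lintegral_mono fun x => le_iSup (fun x : ℝ => (‖w x‖₊ : ℝ≥0∞)) x
    _ = supNormR w := by simp

section SineGordon

variable {u : ℝ → ℝ → ℝ} {u₀ : ℝ → ℝ} {v₀ : SignedMeasure ℝ} {T S : ℝ}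

theorem abs_le_of_eq_dAlembert_sin
    (hsol : ∀ s ∈ Icc 0 T, u s = dAlembert (fun s y => Real.sin (u s y)) u₀ v₀ s)
    (hS : ∀ z, |u₀ z| ≤ S) {s : ℝ} (hs : s ∈ Icc 0 T) (y : ℝ) :
    |u s y| ≤ T ^ 2 + S + v₀.totalVariation.real univ := by
  rw [hsol s hs]
  have := abs_dAlembert_le (g := fun s y => Real.sin (u s y)) (v₀ := v₀) (J := 1)
    (fun _ _ _ => Real.abs_sin_le_one _) hs.1 hS y
  nlinarith [hs.1, hs.2]

theorem eVariationOn_le_of_eq_dAlembert_sin (hu : Measurable (Function.uncurry u))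
    (hu₀ : Function.Periodic u₀ 1)
    (hsol : ∀ s ∈ Icc 0 T, u s = dAlembert (fun s y => Real.sin (u s y)) u₀ v₀ s)
    (hS : ∀ z, |u₀ z| ≤ S) {t : ℝ} (ht : t ∈ Icc 0 T) :
    eVariationOn (u t) (Icc 0 1) ≤ ENNReal.ofReal (2 * (T ^ 2 + S + v₀.totalVariation.real univ))
      + 4 * eVariationOn u₀ (Icc 0 1) + 2 * v₀.totalVariation univ := by
  set R := T ^ 2 + S + v₀.totalVariation.real univ
  have hR0 : 0 ≤ R := by
    have := (abs_nonneg _).trans (hS 0); positivity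
  have hJ : ∀ s ∈ Icc 0 t, ∀ y, |Real.sin (u s y)| ≤ min 1 R := fun s hs y =>
    le_min (Real.abs_sin_le_one _) (Real.abs_sin_le_abs.trans
      (abs_le_of_eq_dAlembert_sin hsol hS ⟨hs.1, hs.2.trans ht.2⟩ y))
  have hJt : min 1 R * t ≤ R := by
    rcases le_total t 1 with h | h
    · nlinarith [min_le_right 1 R, le_min zero_le_one hR0, ht.1]
    · nlinarith [min_le_left 1 R, ht.2, measureReal_nonneg (μ := v₀.totalVariation) (s := univ),
        (abs_nonneg _).trans (hS 0)]
  have hg : Measurable (Function.uncurry fun s y => Real.sin (u s y)) :=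
    Real.measurable_sin.comp hu
  rw [hsol t ht]
  refine (eVariationOn_dAlembert_le hg hJ ht.1 hu₀).trans ?_
  gcongr ?_ + _ + _
  exact ENNReal.ofReal_le_ofReal (by linarith)

end SineGordon

/-- for the 1D sine-Gordon equation on the torus with initial data
u₀ ∈ BV ∩ L^∞ and ∂_t u(0) = v₀ a finite (signed) Borel measure, the solution — given through
its periodic extension by the d'Alembert/Duhamel formula — satisfies u(t) ∈ BV ∩ L^∞ and
‖u(t)‖_BV + ‖u(t)‖_{L^∞} ≲ T² + ‖u₀‖_BV + ‖u₀‖_{L^∞} + ‖v₀‖_M for all t ∈ [0,T]. -/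
theorem sineGordon_BV_bound :
    ∃ C : ℝ, 0 < C ∧ ∀ (T : ℝ), 0 < T → ∀ (u : ℝ → ℝ → ℝ) (u0 : ℝ → ℝ)
      (v0 : MeasureTheory.SignedMeasure ℝ),
      (∀ x : ℝ, u0 (x + 1) = u0 x) →
      (∀ t x : ℝ, u t (x + 1) = u t x) →
      Measurable (Function.uncurry u) →
      bvNormR u0 ≠ ⊤ → supNormR u0 ≠ ⊤ →
      (∀ t ∈ Set.Icc (0:ℝ) T, ∀ x : ℝ,
        u t x = (1/2) * (∫ s in (0:ℝ)..t, ∫ y in (x - t + s)..(x + t - s), Real.sin (u s y))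
          + (1/2) * (u0 (x + t) + u0 (x - t))
          + (1/2) * v0 (Set.Ioc (x - t) (x + t))) →
      ∀ t ∈ Set.Icc (0:ℝ) T,
        (bvNormR (u t) ≠ ⊤ ∧ supNormR (u t) ≠ ⊤) ∧
        bvNormR (u t) + supNormR (u t) ≤
          ENNReal.ofReal C * (ENNReal.ofReal (T^2) + bvNormR u0 + supNormR u0
            + v0.totalVariation Set.univ) := by
  refine ⟨10, by norm_num, fun T _ u u0 v0 hu0 _ hu hbv0 hsup0 hsol t ht => ?_⟩
  replace hsol : ∀ s ∈ Icc 0 T, u s = dAlembert (fun s y => Real.sin (u s y)) u0 v0 s :=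
    fun s hs => funext (hsol s hs)
  have hS := abs_le_toReal_supNormR hsup0
  set X := ENNReal.ofReal (T ^ 2) + bvNormR u0 + supNormR u0 + v0.totalVariation univ
  have hRX : ENNReal.ofReal (T ^ 2 + (supNormR u0).toReal + v0.totalVariation.real univ) ≤ X := by
    rw [ENNReal.ofReal_add (by positivity) measureReal_nonneg,
      ENNReal.ofReal_add (by positivity) ENNReal.toReal_nonneg, ENNReal.ofReal_toReal hsup0,
      ofReal_measureReal]
    exact add_le_add (add_le_add le_self_add le_rfl) le_rfl
  have hsup : supNormR (u t) ≤ X :=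
    (supNormR_le_ofReal (abs_le_of_eq_dAlembert_sin hsol hS ht)).trans hRX
  have hvar : eVariationOn (u t) (Icc 0 1) ≤ 2 * X + 4 * X + 2 * X := by
    refine (eVariationOn_le_of_eq_dAlembert_sin hu hu0 hsol hS ht).trans ?_
    rw [ENNReal.ofReal_mul zero_le_two, ENNReal.ofReal_ofNat]
    gcongr
    · exact le_add_self.trans (le_add_self.trans (le_self_add.trans le_self_add))
    · exact le_add_self
  have hbound : bvNormR (u t) + supNormR (u t) ≤ 10 * X :=
    calc bvNormR (u t) + supNormR (u t)
        ≤ supNormR (u t) + eVariationOn (u t) (Icc 0 1) + supNormR (u t) := by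
          gcongr; exact bvNormR_le_supNormR_add _
      _ ≤ X + (2 * X + 4 * X + 2 * X) + X := by gcongr
      _ = 10 * X := by ring
  have hX : 10 * X ≠ ⊤ := by finiteness
  exact ⟨⟨ne_top_of_le_ne_top hX (le_self_add.trans hbound),
    ne_top_of_le_ne_top hX (le_add_self.trans hbound)⟩, by rwa [ENNReal.ofReal_ofNat]⟩
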